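/- Let K and V be finite index sets, L ≥ 1 a walk length, z : {1,…,L} → K a topic sequence and v : {1,…,L} → V a node sequence. Let θ : K → ℝ and φ : K → V → ℝ be arbitrary functions. Define the HMM parameters by π_k := θ_k (initial distribution), a_{j,k} := θ_k for all j (transition probabilities, independent of the current state), and b_{k,u} := φ_k(u) (emission probabilities). Then the HMM generating probability equals the LDA generating probability, i.e. π_{z_1} · (∏_{l=1}^{L-1} b_{z_l, v_l} · a_{z_l, z_{l+1}}) · b_{z_L, v_L} = ∏_{l=1}^{L} φ_{z_l}(v_l) · θ_{z_l}. -/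

import Mathlib

/-! Since the transitions `a j k = θ k` forget the current state, the initial factor `θ (z 1)` and
the transition factors `θ (z (l + 1))` supply exactly one `θ (z l)` for every position `l`, so the
HMM product is a regrouping of the LDA product. -/

open Finset

theorem Finset.mul_prod_Ico_mul_succ_mul {M : Type*} [CommMonoid M] (f g : ℕ → M) {a b : ℕ}
    (hab : a ≤ b) :
    g a * (∏ l ∈ Ico a b, f l * g (l + 1)) * f b = ∏ l ∈ Icc a b, f l * g l := by
  induction b, hab using Nat.le_induction with
  | base => simp [mul_comm]
  | succ b hab ih =>
    rw [prod_Ico_succ_top hab, prod_Icc_succ_top (by omega), ← ih]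
    ac_rfl

theorem hmm_eq_lda_probability_general
    {K V : Type*}
    (L : ℕ) (hL : 1 ≤ L)
    (z : ℕ → K) (v : ℕ → V)
    (θ : K → ℝ) (φ : K → V → ℝ)
    (π : K → ℝ) (a : K → K → ℝ) (b : K → V → ℝ)
    (hπ : ∀ k, π k = θ k)
    (ha : ∀ j k, a j k = θ k)
    (hb : ∀ k u, b k u = φ k u) :
    π (z 1) * (∏ l ∈ Finset.Icc 1 (L - 1), b (z l) (v l) * a (z l) (z (l + 1)))
        * b (z L) (v L)
      = ∏ l ∈ Finset.Icc 1 L, φ (z l) (v l) * θ (z l) := by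
  have hL_not_min : ¬IsMin L := by simpa using Nat.one_le_iff_ne_zero.mp hL
  simp only [hπ, ha, hb, Icc_sub_one_right_eq_Ico_of_not_isMin hL_not_min]
  exact mul_prod_Ico_mul_succ_mul (fun l ↦ φ (z l) (v l)) (fun l ↦ θ (z l)) hL

/-- Lemma 1 (TNE paper): the LDA model is a special case of the HMM.
If the HMM initial distribution is `π k = θ k`, the transition probabilities are
`a j k = θ k` (independent of the current state `j`), and the emission
probabilities are `b k u = φ k u`, then the HMM generating probability of the
topic sequence `z` and node sequence `v` (indexed `1,…,L`) equals the LDA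
generating probability. -/
theorem hmm_eq_lda_probability
    {K V : Type*} [Fintype K] [Fintype V]
    (L : ℕ) (hL : 1 ≤ L)
    (z : ℕ → K) (v : ℕ → V)
    (θ : K → ℝ) (φ : K → V → ℝ)
    (π : K → ℝ) (a : K → K → ℝ) (b : K → V → ℝ)
    (hπ : ∀ k, π k = θ k)
    (ha : ∀ j k, a j k = θ k)
    (hb : ∀ k u, b k u = φ k u) :
    π (z 1) * (∏ l ∈ Finset.Icc 1 (L - 1), b (z l) (v l) * a (z l) (z (l + 1)))
        * b (z L) (v L)
      = ∏ l ∈ Finset.Icc 1 L, φ (z l) (v l) * θ (z l) :=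
  hmm_eq_lda_probability_general L hL z v θ φ π a b hπ ha hb
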